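/- Completeness of SC for simplicial models: if a formula φ of L_D is valid in every (generalized) simplicial model (i.e., C,w ⊨ φ for every simplicial model C and every world w of C), then φ is provable in the proof system SC. -/

import Mathlib

attribute [local instance] Classical.propDecidable

noncomputable section

/-- Formulas of the epistemic language `L_D` with distributed knowledge `D_B`
for nonempty groups `B` of agents. -/
inductive Form (A AP : Type) : Type
  | atom : AP → Form A AP
  | neg  : Form A AP → Form A AP
  | and  : Form A AP → Form A AP → Form A AP
  | dk   : (B : Finset A) → B.Nonempty → Form A AP → Form A AP

namespace Form

variable {A AP : Type}

/-- Disjunction, `φ ∨ ψ := ¬(¬φ ∧ ¬ψ)`. -/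
def or (φ ψ : Form A AP) : Form A AP := neg ((neg φ).and (neg ψ))

/-- Implication, `φ ⇒ ψ := ¬φ ∨ ψ`. -/
def imp (φ ψ : Form A AP) : Form A AP := (neg φ).or ψ

/-- `⊤ := p ∨ ¬p`. -/
def verum [Nonempty AP] : Form A AP :=
  (atom (Classical.arbitrary AP)).or (neg (atom (Classical.arbitrary AP)))

/-- `⊥ := ¬⊤`. -/
def falsum [Nonempty AP] : Form A AP := neg verum

/-- Individual knowledge `K_a φ := D_{{a}} φ`. -/
def K (a : A) (φ : Form A AP) : Form A AP := dk {a} (Finset.singleton_nonempty a) φ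

/-- `dead_a := K_a ⊥`. -/
def deadAgent [Nonempty AP] (a : A) : Form A AP := K a falsum

/-- `alive_a := ¬dead_a`. -/
def aliveAgent [Nonempty AP] (a : A) : Form A AP := (deadAgent a).neg

/-- `alive_B := ¬ D_B ⊥`. -/
def aliveGrp [Nonempty AP] (B : Finset A) (hB : B.Nonempty) : Form A AP := (dk B hB falsum).neg

/-- Finite conjunction. -/
def bigAnd [Nonempty AP] : List (Form A AP) → Form A AP
  | [] => verum
  | φ :: t => φ.and (bigAnd t)

/-- Finite disjunction. -/
def bigOr [Nonempty AP] : List (Form A AP) → Form A AP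
  | [] => falsum
  | φ :: t => φ.or (bigOr t)

/-- `dead_C := ⋀_{a ∈ C} dead_a`. -/
def deadGrp [Nonempty AP] (C : Finset A) : Form A AP := bigAnd (C.toList.map deadAgent)

end Form

/-- A propositional tautology: true under every assignment that interprets `¬` and `∧`
classically (atoms and `D_B`-formulas are treated as opaque). -/
def IsTaut {A AP : Type} (φ : Form A AP) : Prop :=
  ∀ v : Form A AP → Prop,
    (∀ ψ : Form A AP, v ψ.neg ↔ ¬ v ψ) →
    (∀ ψ χ : Form A AP, v (ψ.and χ) ↔ (v ψ ∧ v χ)) →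
    v φ

theorem unionNE {α : Type} [DecidableEq α] {s t : Finset α} (h : s.Nonempty) :
    (s ∪ t).Nonempty :=
  ⟨h.choose, Finset.mem_union_left _ h.choose_spec⟩

section ProofSystem

variable {A AP : Type} [Fintype A] [Nonempty AP]

/-- The proof system `SC` (axioms `K`, `B`, `4`, `Mono`, `Union`, `NE`, `P`, all
propositional tautologies, modus ponens and necessitation), extended by an arbitrary
additional set `Ax` of axioms. -/
inductive Prf (Ax : Form A AP → Prop) : Form A AP → Prop
  | taut {φ : Form A AP} : IsTaut φ → Prf Ax φ
  | mp {φ ψ : Form A AP} : Prf Ax (φ.imp ψ) → Prf Ax φ → Prf Ax ψ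
  | nec {φ : Form A AP} (B : Finset A) (hB : B.Nonempty) :
      Prf Ax φ → Prf Ax (Form.dk B hB φ)
  | axK {φ ψ : Form A AP} (B : Finset A) (hB : B.Nonempty) :
      Prf Ax ((Form.dk B hB (φ.imp ψ)).imp ((Form.dk B hB φ).imp (Form.dk B hB ψ)))
  | axB {φ : Form A AP} (B : Finset A) (hB : B.Nonempty) :
      Prf Ax (φ.imp (Form.dk B hB (Form.neg (Form.dk B hB φ.neg))))
  | ax4 {φ : Form A AP} (B : Finset A) (hB : B.Nonempty) :
      Prf Ax ((Form.dk B hB φ).imp (Form.dk B hB (Form.dk B hB φ)))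
  | axMono {φ : Form A AP} (B B' : Finset A) (hB : B.Nonempty) (hB' : B'.Nonempty)
      (hsub : B ⊆ B') : Prf Ax ((Form.dk B hB φ).imp (Form.dk B' hB' φ))
  | axUnion (B B' : Finset A) (hB : B.Nonempty) (hB' : B'.Nonempty) :
      Prf Ax (((Form.aliveGrp B hB).and (Form.aliveGrp B' hB')).imp
        (Form.aliveGrp (B ∪ B') (unionNE hB)))
  | axNE : Prf Ax (Form.bigOr ((Finset.univ : Finset A).toList.map Form.aliveAgent))
  | axP {φ : Form A AP} (B : Finset A) (hB : B.Nonempty) :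
      Prf Ax ((((Form.aliveGrp B hB).and (Form.deadGrp Bᶜ)).and φ).imp
        (Form.dk B hB ((Form.deadGrp Bᶜ).imp φ)))
  | extra {φ : Form A AP} : Ax φ → Prf Ax φ

/-- Provability in `SC` itself (no extra axioms). -/
def SC : Form A AP → Prop := Prf (fun _ => False)

/-- Instances of Axiom `Min : alive_B ∧ dead_{A∖B} ⇒ D_B dead_{A∖B}` for `B ⊊ A`. -/
def MinAx : Form A AP → Prop := fun φ =>
  ∃ (B : Finset A) (hB : B.Nonempty), B ≠ Finset.univ ∧
    φ = ((Form.aliveGrp B hB).and (Form.deadGrp Bᶜ)).imp (Form.dk B hB (Form.deadGrp Bᶜ))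

/-- Instances of Axiom `Max : alive_B ⇒ ¬ D_B ¬ dead_{A∖B}` for `B ⊊ A`. -/
def MaxAx : Form A AP → Prop := fun φ =>
  ∃ (B : Finset A) (hB : B.Nonempty), B ≠ Finset.univ ∧
    φ = (Form.aliveGrp B hB).imp (Form.neg (Form.dk B hB (Form.neg (Form.deadGrp Bᶜ))))

/-- Provability in `SCmin = SC + Min`. -/
def SCmin : Form A AP → Prop := Prf MinAx

/-- Provability in `SCmax = SC + Max`. -/
def SCmax : Form A AP → Prop := Prf MaxAx

/-- `Γ ⊢_P φ` : some finite conjunction of members of `Γ` provably implies `φ`. -/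
def ProvesFrom (P : Form A AP → Prop) (Γ : Set (Form A AP)) (φ : Form A AP) : Prop :=
  ∃ L : List (Form A AP), (∀ γ ∈ L, γ ∈ Γ) ∧ P ((Form.bigAnd L).imp φ)

/-- Consistency of a set of formulas with respect to a provability predicate `P`. -/
def ConsistentSet (P : Form A AP → Prop) (Γ : Set (Form A AP)) : Prop :=
  ¬ ProvesFrom P Γ Form.falsum

/-- Maximal consistent sets of formulas. -/
def MaxConsistent (P : Form A AP → Prop) (Γ : Set (Form A AP)) : Prop :=
  ConsistentSet P Γ ∧ ∀ φ ∉ Γ, ¬ ConsistentSet P (insert φ Γ)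

end ProofSystem

/-! ### Simplicial models -/

/-- The data of a (generalized) simplicial model: a set `S` of simplexes over the vertex
type `V`, a colouring `chi`, a set of worlds `Wld` and a labelling of worlds. -/
structure SimpData (A AP V : Type) where
  S : Set (Finset V)
  chi : V → A
  Wld : Set (Finset V)
  label : Finset V → Set AP

namespace SimpData

variable {A AP V : Type}

/-- A facet: a simplex maximal under inclusion. -/
def IsFacet (C : SimpData A AP V) (X : Finset V) : Prop :=
  X ∈ C.S ∧ ∀ Y ∈ C.S, X ⊆ Y → X = Y

/-- `⟨V,S,chi⟩` is a chromatic simplicial complex: simplexes are nonempty, every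
singleton is a simplex, `S` is downward closed, and every simplex has pairwise
distinct colours. -/
def IsComplex (C : SimpData A AP V) : Prop :=
  (∀ X ∈ C.S, X.Nonempty) ∧
  (∀ v : V, ({v} : Finset V) ∈ C.S) ∧
  (∀ X ∈ C.S, ∀ Y : Finset V, Y ⊆ X → Y.Nonempty → Y ∈ C.S) ∧
  (∀ X ∈ C.S, ∀ v ∈ X, ∀ w ∈ X, C.chi v = C.chi w → v = w)

/-- `C` is a generalized simplicial model: a chromatic simplicial complex together
with a set of worlds `Wld` with `Facets(C) ⊆ Wld ⊆ S`. -/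
def IsModel (C : SimpData A AP V) : Prop :=
  C.IsComplex ∧ (∀ X, C.IsFacet X → X ∈ C.Wld) ∧ C.Wld ⊆ C.S

/-- The model is minimal: the worlds are exactly the facets. -/
def Minimal (C : SimpData A AP V) : Prop := ∀ X, X ∈ C.Wld ↔ C.IsFacet X

/-- The model is maximal: every simplex is a world. -/
def Maximal (C : SimpData A AP V) : Prop := C.Wld = C.S

end SimpData

/-- Satisfaction on simplicial models: `C,w ⊨ D_B φ` iff `φ` holds at every world `w'`
with `B ⊆ chi(w ∩ w')`. -/
def SimpData.sat {A AP V : Type} (C : SimpData A AP V) : Finset V → Form A AP → Prop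
  | w, .atom p => p ∈ C.label w
  | w, .neg φ => ¬ C.sat w φ
  | w, .and φ ψ => C.sat w φ ∧ C.sat w ψ
  | w, .dk B _ φ => ∀ w' ∈ C.Wld, (↑B : Set A) ⊆ C.chi '' ((↑w : Set V) ∩ ↑w') → C.sat w' φ

/-! ### Partial epistemic models -/

/-- The data of a partial epistemic model: an accessibility relation for each agent and
a labelling of worlds. -/
structure PEData (A AP W : Type) where
  rel : A → W → W → Prop
  label : W → Set AP

namespace PEData

variable {A AP W : Type}

/-- Each relation is a partial equivalence relation (symmetric and transitive). -/
def IsPE (M : PEData A AP W) : Prop := ∀ a : A, Symmetric (M.rel a) ∧ Transitive (M.rel a)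

/-- The set of agents alive in a world. -/
def live (M : PEData A AP W) (w : W) : Set A := {a | M.rel a w w}

/-- Every world has at least one alive agent. -/
def NoEmptyWorld (M : PEData A AP W) : Prop := ∀ w : W, (M.live w).Nonempty

/-- Distinct worlds with the same alive agents are distinguished by some alive agent. -/
def Proper (M : PEData A AP W) : Prop :=
  ∀ w w' : W, w ≠ w' → M.live w = M.live w' → ∃ a ∈ M.live w, ¬ M.rel a w w'

/-- The model has no sub-world. -/
def Minimal (M : PEData A AP W) : Prop :=
  ∀ w w' : W, M.live w ⊂ M.live w' → ∃ a ∈ M.live w, ¬ M.rel a w w'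

/-- The model has all sub-worlds. -/
def Maximal (M : PEData A AP W) : Prop :=
  ∀ w' : W, ∀ B : Set A, B.Nonempty → B ⊂ M.live w' →
    ∃ w : W, M.live w = B ∧ ∀ a ∈ B, M.rel a w w'

end PEData

/-- Satisfaction on partial epistemic models: `M,w ⊨ D_B φ` iff `φ` holds at every `w'`
with `w ∼_a w'` for all `a ∈ B`. -/
def PEData.sat {A AP W : Type} (M : PEData A AP W) : W → Form A AP → Prop
  | w, .atom p => p ∈ M.label w
  | w, .neg φ => ¬ M.sat w φ
  | w, .and φ ψ => M.sat w φ ∧ M.sat w ψ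
  | w, .dk B _ φ => ∀ w' : W, (∀ a ∈ B, M.rel a w w') → M.sat w' φ

/-- The partial epistemic model `κ(C)` associated with a simplicial model `C`:
same worlds, `w ∼_a w'` iff `a ∈ chi(w ∩ w')`, same labelling. -/
def kappa {A AP V : Type} (C : SimpData A AP V) : PEData A AP {w : Finset V // w ∈ C.Wld} where
  rel := fun a w w' => a ∈ C.chi '' ((↑w.1 : Set V) ∩ ↑w'.1)
  label := fun w => C.label w.1

/-- Vertices of `σ(M)`: pairs `v^w_a = (a, [w]_a)` with `a` alive in `w`. -/
def sigmaVert {A AP W : Type} (M : PEData A AP W) : Type :=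
  {v : A × Set W // ∃ w : W, M.rel v.1 w w ∧ v.2 = {w' | M.rel v.1 w w'}}

/-- The world `X_w = { v^w_a | a ∈ live(w) }` of `σ(M)`. -/
def sigmaWorld {A AP W : Type} [Fintype A] (M : PEData A AP W) (w : W) :
    Finset (sigmaVert M) :=
  ((Finset.univ : Finset A).filter (fun a => M.rel a w w)).attach.image
    (fun a => ⟨(a.1, {w' | M.rel a.1 w w'}),
      ⟨w, by exact (Finset.mem_filter.mp a.2).2, rfl⟩⟩)

/-- The simplicial model `σ(M)` associated with a partial epistemic model `M`:
simplexes are the nonempty subsets of the sets `X_w`, worlds are the `X_w`,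
colouring is the first projection, and `ℓ(X_w) = L(w)`. -/
def sigmaModel {A AP W : Type} [Fintype A] (M : PEData A AP W) :
    SimpData A AP (sigmaVert M) where
  S := {X | X.Nonempty ∧ ∃ w : W, X ⊆ sigmaWorld M w}
  chi := fun v => v.1.1
  Wld := {X | ∃ w : W, X = sigmaWorld M w}
  label := fun X => {p | ∃ w : W, X = sigmaWorld M w ∧ p ∈ M.label w}

/-! ### Pseudo-models, the canonical model and unravelling -/

/-- The data of a pseudo-model: a relation `∼_B` for every group `B ⊆ A`. -/
structure PseudoData (A AP W : Type) where
  rel : Finset A → W → W → Prop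
  label : W → Set AP

/-- `M` is a pseudo-model: each `∼_B` is symmetric and transitive, the relations are
antitone (`∼_{B'} ⊆ ∼_B` for `B ⊆ B'`), and `w ∼_B w` together with `w ∼_{B'} w`
implies `w ∼_{B ∪ B'} w`. -/
def PseudoData.IsPseudo {A AP W : Type} [DecidableEq A] (M : PseudoData A AP W) : Prop :=
  (∀ B : Finset A, Symmetric (M.rel B)) ∧
  (∀ B : Finset A, Transitive (M.rel B)) ∧
  (∀ B B' : Finset A, B ⊆ B' → ∀ w w' : W, M.rel B' w w' → M.rel B w w') ∧
  (∀ (w : W) (B B' : Finset A), M.rel B w w → M.rel B' w w → M.rel (B ∪ B') w w)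

/-- Satisfaction on pseudo-models: `D_B φ` quantifies over `∼_B`-successors. -/
def PseudoData.sat {A AP W : Type} (M : PseudoData A AP W) : W → Form A AP → Prop
  | w, .atom p => p ∈ M.label w
  | w, .neg φ => ¬ M.sat w φ
  | w, .and φ ψ => M.sat w φ ∧ M.sat w ψ
  | w, .dk B _ φ => ∀ w' : W, M.rel B w w' → M.sat w' φ

/-- The canonical pseudo-model of a proof system `P`: worlds are the maximal
`P`-consistent sets, `Γ ∼_B Δ` iff every `φ` with `D_B φ ∈ Γ` satisfies `φ ∈ Δ`,
and `L(Γ) = Γ ∩ AP`. -/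
def canonicalPsm (A AP : Type) [Fintype A] [Nonempty AP] (P : Form A AP → Prop) :
    PseudoData A AP {Γ : Set (Form A AP) // MaxConsistent P Γ} where
  rel := fun B Γ Δ => ∀ (hB : B.Nonempty) (φ : Form A AP), Form.dk B hB φ ∈ Γ.1 → φ ∈ Δ.1
  label := fun Γ => {p | Form.atom p ∈ Γ.1}

/-- `IsHist M w l` : the sequence starting at `w` with steps `l` is a history of `M`. -/
def IsHist {A AP W : Type} (M : PseudoData A AP W) : W → List (Finset A × W) → Prop
  | _, [] => True
  | w, (B, w') :: t => M.rel B w w' ∧ IsHist M w' t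

/-- A history `(w₀, B₁, w₁, …, B_k, w_k)` of a pseudo-model `M`. -/
structure Hist {A AP W : Type} (M : PseudoData A AP W) where
  first : W
  steps : List (Finset A × W)
  valid : IsHist M first steps

/-- The last world of a history. -/
def Hist.last {A AP W : Type} {M : PseudoData A AP W} (h : Hist M) : W :=
  (h.steps.map Prod.snd).getLastD h.first

/-- `h →_a h'` : `h'` extends `h` by one step `(B, w)` with `a ∈ B`. -/
def histStep {A AP W : Type} (M : PseudoData A AP W) (a : A) (h h' : Hist M) : Prop :=
  ∃ (B : Finset A) (w : W), a ∈ B ∧ h'.first = h.first ∧ h'.steps = h.steps ++ [(B, w)]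

/-- `∼^U_a` : the symmetric-transitive closure of `→_a`. -/
def histRel {A AP W : Type} (M : PseudoData A AP W) (a : A) : Hist M → Hist M → Prop :=
  Relation.TransGen (fun h h' => histStep M a h h' ∨ histStep M a h' h)

/-- The unravelling `U(M)` of a pseudo-model `M`: worlds are histories, relations are
the `∼^U_a`, and `L^U(h) = L(last h)`. -/
def unravel {A AP W : Type} (M : PseudoData A AP W) : PEData A AP (Hist M) where
  rel := histRel M
  label := fun h => M.label h.last

/-- World-equivalence `w ≡ w'` : same alive agents and related by every alive agent. -/
def pequiv {A AP W : Type} (M : PEData A AP W) (w w' : W) : Prop :=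
  M.live w = M.live w' ∧ ∀ a ∈ M.live w, M.rel a w w'

/-- The quotient of a partial epistemic model by world-equivalence. -/
def properify {A AP W : Type} (M : PEData A AP W) : PEData A AP (Quot (pequiv M)) where
  rel := fun a x y => ∃ w w' : W, x = Quot.mk _ w ∧ y = Quot.mk _ w' ∧ M.rel a w w'
  label := fun x => {p | ∃ w : W, x = Quot.mk _ w ∧ p ∈ M.label w}

/-! ### Local simplicial models, morphisms and the guarded positive fragment -/

/-- The data of a local simplicial model: atomic propositions label the vertices. -/
structure LocalSimpData (A AP V : Type) where
  S : Set (Finset V)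
  chi : V → A
  Wld : Set (Finset V)
  vlabel : V → Set AP

namespace LocalSimpData

variable {A AP V : Type}

/-- A facet: a simplex maximal under inclusion. -/
def IsFacet (C : LocalSimpData A AP V) (X : Finset V) : Prop :=
  X ∈ C.S ∧ ∀ Y ∈ C.S, X ⊆ Y → X = Y

/-- `C` is a local simplicial model with respect to the ownership map `owner : AP → A`:
a chromatic simplicial complex with `Facets ⊆ Wld ⊆ S`, where each vertex is labelled
with atomic propositions belonging to its colour. -/
def IsModel (C : LocalSimpData A AP V) (owner : AP → A) : Prop :=
  (∀ X ∈ C.S, X.Nonempty) ∧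
  (∀ v : V, ({v} : Finset V) ∈ C.S) ∧
  (∀ X ∈ C.S, ∀ Y : Finset V, Y ⊆ X → Y.Nonempty → Y ∈ C.S) ∧
  (∀ X ∈ C.S, ∀ v ∈ X, ∀ w ∈ X, C.chi v = C.chi w → v = w) ∧
  (∀ X, C.IsFacet X → X ∈ C.Wld) ∧ C.Wld ⊆ C.S ∧
  (∀ v : V, ∀ p ∈ C.vlabel v, owner p = C.chi v)

/-- The labelling of a world: the union of the labellings of its vertices. -/
def wlabel (C : LocalSimpData A AP V) (X : Finset V) : Set AP :=
  ⋃ v ∈ X, C.vlabel v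

end LocalSimpData

/-- Purely propositional formulas. -/
inductive PForm (AP : Type) : Type
  | atom : AP → PForm AP
  | neg : PForm AP → PForm AP
  | and : PForm AP → PForm AP → PForm AP

/-- The atomic propositions occurring in a propositional formula. -/
def PForm.atoms {AP : Type} : PForm AP → Set AP
  | .atom p => {p}
  | .neg ψ => ψ.atoms
  | .and ψ χ => ψ.atoms ∪ χ.atoms

/-- Satisfaction of propositional formulas at a world of a local simplicial model. -/
def PForm.psat {A AP V : Type} (C : LocalSimpData A AP V) (w : Finset V) : PForm AP → Prop
  | .atom p => p ∈ C.wlabel w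
  | .neg ψ => ¬ PForm.psat C w ψ
  | .and ψ χ => PForm.psat C w ψ ∧ PForm.psat C w χ

/-- The guarded positive epistemic fragment:
`φ ::= (alive_B ⇒ ψ_B) | φ∧φ | φ∨φ | D_U φ | C_U φ`. -/
inductive GForm (A AP : Type) : Type
  | guard : Finset A → PForm AP → GForm A AP
  | and : GForm A AP → GForm A AP → GForm A AP
  | or : GForm A AP → GForm A AP → GForm A AP
  | dk : Finset A → GForm A AP → GForm A AP
  | ck : Finset A → GForm A AP → GForm A AP

/-- Well-formedness of guarded formulas: in a guard `alive_B ⇒ ψ_B`, all atomic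
propositions of `ψ_B` belong to agents of `B`. -/
def GForm.WF {A AP : Type} (owner : AP → A) : GForm A AP → Prop
  | .guard B ψ => ∀ p ∈ ψ.atoms, owner p ∈ B
  | .and φ₁ φ₂ => φ₁.WF owner ∧ φ₂.WF owner
  | .or φ₁ φ₂ => φ₁.WF owner ∧ φ₂.WF owner
  | .dk _ φ => φ.WF owner
  | .ck _ φ => φ.WF owner

/-- Reachability through a sequence of worlds, consecutive ones sharing a
`U`-coloured simplex. -/
def creach {A AP V : Type} (C : LocalSimpData A AP V) (U : Finset A) :
    Finset V → Finset V → Prop :=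
  Relation.ReflTransGen
    (fun X Y => Y ∈ C.Wld ∧ (↑U : Set A) ⊆ C.chi '' ((↑X : Set V) ∩ ↑Y))

/-- Satisfaction of guarded positive formulas on local simplicial models. -/
def GForm.gsat {A AP V : Type} (C : LocalSimpData A AP V) :
    Finset V → GForm A AP → Prop
  | w, .guard B ψ => ((↑B : Set A) ⊆ C.chi '' (↑w : Set V)) → ψ.psat C w
  | w, .and φ₁ φ₂ => φ₁.gsat C w ∧ φ₂.gsat C w
  | w, .or φ₁ φ₂ => φ₁.gsat C w ∨ φ₂.gsat C w
  | w, .dk U φ => ∀ w' ∈ C.Wld, (↑U : Set A) ⊆ C.chi '' ((↑w : Set V) ∩ ↑w') → φ.gsat C w'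
  | w, .ck U φ => ∀ w' ∈ C.Wld, creach C U w w' → φ.gsat C w'

/-- Image of a simplex under a vertex map. -/
def fimage {V V' : Type} (f : V → V') (X : Finset V) : Finset V' :=
  X.image f

/-- Morphisms of local simplicial models: map simplexes to simplexes and worlds to
worlds, preserving colours and vertex labellings. -/
def IsMorphism {A AP V V' : Type} (C : LocalSimpData A AP V) (D : LocalSimpData A AP V')
    (f : V → V') : Prop :=
  (∀ X ∈ C.S, fimage f X ∈ D.S) ∧
  (∀ X ∈ C.Wld, fimage f X ∈ D.Wld) ∧
  (∀ v : V, D.chi (f v) = C.chi v) ∧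
  (∀ v : V, D.vlabel (f v) = C.vlabel v)

end

/-!
Canonical-model argument. The maximal consistent sets of `SC` form a pseudo-model in which
membership coincides with truth. Unravelling it into histories gives a partial epistemic model
with the same theory, since histories related by every agent of `B` end in `∼_B`-related sets.
The simplicial model `σ` of a partial epistemic model preserves truth as soon as
world-equivalent worlds carry the same labels. For the unravelled canonical model this is
where axiom `P` enters: world-equivalent histories end in the same maximal consistent set.
-/

section

variable {α ι : Type*}

theorem Relation.ReflTransGen.rel_of_rel_self {r : α → α → Prop} [Std.Symm r] [IsTrans α r]
    {x y z : α} (hxy : ReflTransGen r x y) (hxz : ReflTransGen r x z) (hy : r y y) : r y z := by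
  rcases reflTransGen_iff_eq_or_transGen.1 ((symm hxy).trans hxz) with rfl | hyz
  · exact hy
  · rwa [transGen_eq_self] at hyz

theorem List.forall_of_rdropWhile_length_le {p : α → Bool} {c d : List α}
    (h : ((c ++ d).rdropWhile p).length ≤ c.length) : ∀ x ∈ d, p x := by
  obtain ⟨e, he⟩ := List.prefix_of_prefix_length_le (List.rdropWhile_prefix p (c ++ d))
    (List.prefix_append c d) h
  have htake : (c ++ d).rtakeWhile p = e ++ d := by
    refine List.append_cancel_left (as := (c ++ d).rdropWhile p) ?_
    rw [List.rdropWhile_append_rtakeWhile, ← List.append_assoc, he]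
  intro x hx
  refine List.mem_rtakeWhile_imp (l := c ++ d) ?_
  rw [htake]
  exact List.mem_append_right e hx

theorem List.exists_common_prefix_of_rdropWhile_eq (p : ι → α → Bool) {s : Finset ι}
    (hs : s.Nonempty) {l l' : List α}
    (h : ∀ i ∈ s, l'.rdropWhile (p i) = l.rdropWhile (p i)) :
    ∃ c d d', l = c ++ d ∧ l' = c ++ d' ∧
      (∀ x ∈ d, ∀ i ∈ s, p i x) ∧ ∀ x ∈ d', ∀ i ∈ s, p i x := by
  obtain ⟨i₀, hi₀, hmax⟩ := s.exists_max_image (fun i => (l.rdropWhile (p i)).length) hs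
  have hsplit : ∀ m : List α, (∀ i ∈ s, m.rdropWhile (p i) = l.rdropWhile (p i)) →
      ∃ d, m = l.rdropWhile (p i₀) ++ d ∧ ∀ x ∈ d, ∀ i ∈ s, p i x := by
    intro m hm
    obtain ⟨d, rfl⟩ := hm i₀ hi₀ ▸ List.rdropWhile_prefix (p i₀) m
    exact ⟨d, rfl, fun x hx i hi => List.forall_of_rdropWhile_length_le
      (by rw [hm i hi]; exact hmax i hi) x hx⟩
  obtain ⟨d, hd, hdp⟩ := hsplit l fun _ _ => rfl
  obtain ⟨d', hd', hd'p⟩ := hsplit l' h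
  exact ⟨_, d, d', hd, hd', hdp, hd'p⟩

end

namespace Form

variable {A AP : Type}

def IsValuation (v : Form A AP → Prop) : Prop :=
  (∀ ψ : Form A AP, v ψ.neg ↔ ¬ v ψ) ∧
    (∀ ψ χ : Form A AP, v (ψ.and χ) ↔ (v ψ ∧ v χ))

namespace IsValuation

variable {v : Form A AP → Prop}

theorem neg (hv : IsValuation v) (ψ : Form A AP) : v ψ.neg ↔ ¬ v ψ := hv.1 ψ

theorem and (hv : IsValuation v) (ψ χ : Form A AP) : v (ψ.and χ) ↔ (v ψ ∧ v χ) :=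
  hv.2 ψ χ

theorem or (hv : IsValuation v) (ψ χ : Form A AP) : v (ψ.or χ) ↔ (v ψ ∨ v χ) := by
  rw [Form.or, hv.neg, hv.and, hv.neg, hv.neg]
  tauto

theorem imp (hv : IsValuation v) (ψ χ : Form A AP) : v (ψ.imp χ) ↔ (v ψ → v χ) := by
  rw [Form.imp, hv.or, hv.neg, imp_iff_not_or]

theorem verum [Nonempty AP] (hv : IsValuation v) : v (verum : Form A AP) := by
  rw [Form.verum, hv.or, hv.neg]
  exact em _

theorem falsum [Nonempty AP] (hv : IsValuation v) : ¬ v (falsum : Form A AP) := by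
  rw [Form.falsum, hv.neg, not_not]
  exact hv.verum

theorem bigAnd [Nonempty AP] (hv : IsValuation v) (L : List (Form A AP)) :
    v (bigAnd L) ↔ ∀ γ ∈ L, v γ := by
  induction L with
  | nil => simpa [Form.bigAnd] using hv.verum
  | cons γ t ih => rw [Form.bigAnd, hv.and, ih, List.forall_mem_cons]

theorem bigOr [Nonempty AP] (hv : IsValuation v) (L : List (Form A AP)) :
    v (bigOr L) ↔ ∃ γ ∈ L, v γ := by
  induction L with
  | nil => simpa [Form.bigOr] using hv.falsum
  | cons γ t ih => rw [Form.bigOr, hv.or, ih, List.exists_mem_cons_iff]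

end IsValuation

end Form

open Form

section Propositional

variable {A AP : Type} [Fintype A] [Nonempty AP] {Ax : Form A AP → Prop}

theorem Prf.of_tautology {φ : Form A AP} (h : ∀ v, IsValuation v → v φ) : Prf Ax φ :=
  Prf.taut fun v hneg hand => h v ⟨hneg, hand⟩

theorem Prf.mp_tautology {φ ψ : Form A AP} (hφ : Prf Ax φ)
    (h : ∀ v, IsValuation v → v φ → v ψ) : Prf Ax ψ :=
  (Prf.of_tautology fun v hv => (hv.imp φ ψ).2 (h v hv)).mp hφ

theorem Prf.mp_tautology₂ {φ₁ φ₂ ψ : Form A AP} (h₁ : Prf Ax φ₁) (h₂ : Prf Ax φ₂)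
    (h : ∀ v, IsValuation v → v φ₁ → v φ₂ → v ψ) : Prf Ax ψ :=
  ((Prf.of_tautology fun v hv => by
    simp only [hv.imp]
    exact h v hv).mp h₁).mp h₂

theorem Prf.dk_imp_dk {φ ψ : Form A AP} {B : Finset A} (hB : B.Nonempty)
    (h : Prf Ax (φ.imp ψ)) : Prf Ax ((dk B hB φ).imp (dk B hB ψ)) :=
  (Prf.axK B hB).mp (Prf.nec B hB h)

theorem Prf.bigAnd_map_dk_imp {B : Finset A} (hB : B.Nonempty) {L : List (Form A AP)}
    {χ : Form A AP} (h : Prf Ax ((bigAnd L).imp χ)) :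
    Prf Ax ((bigAnd (L.map (dk B hB))).imp (dk B hB χ)) := by
  induction L generalizing χ with
  | nil =>
    have hχ : Prf Ax (dk B hB χ) :=
      Prf.nec B hB (h.mp_tautology fun _ hv hχ => (hv.imp _ _).1 hχ hv.verum)
    exact hχ.mp_tautology fun _ hv hχ => (hv.imp _ _).2 fun _ => hχ
  | cons γ t ih =>
    have hcurry : Prf Ax ((bigAnd t).imp (γ.imp χ)) := h.mp_tautology fun v hv => by
      simp only [hv.imp, Form.bigAnd, hv.and]
      tauto
    exact Prf.mp_tautology₂ (ih hcurry) (Prf.axK B hB) fun v hv => by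
      simp only [List.map_cons, Form.bigAnd, hv.imp, hv.and]
      tauto

end Propositional

section Lindenbaum

variable {A AP : Type} [Nonempty AP] {Γ : Set (Form A AP)}

theorem ConsistentSet.exists_maxConsistent_superset {P : Form A AP → Prop}
    (h : ConsistentSet P Γ) : ∃ Δ, Γ ⊆ Δ ∧ MaxConsistent P Δ := by
  have hchain : ∀ c ⊆ {Δ | ConsistentSet P Δ}, IsChain (· ⊆ ·) c → c.Nonempty →
      ∃ ub ∈ {Δ | ConsistentSet P Δ}, ∀ s ∈ c, s ⊆ ub := by
    refine fun c hc hchain hne => ⟨⋃₀ c, ?_, fun s => Set.subset_sUnion_of_mem⟩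
    rintro ⟨L, hL, hp⟩
    obtain ⟨s, hs, hLs⟩ := hchain.directedOn.exists_mem_subset_of_finite_of_subset_sUnion hne
      L.finite_toSet hL
    exact hc hs ⟨L, fun γ hγ => hLs hγ, hp⟩
  obtain ⟨Δ, hΓΔ, hmax⟩ := zorn_subset_nonempty _ hchain Γ h
  exact ⟨Δ, hΓΔ, hmax.1, fun φ hφ hcons =>
    hφ (hmax.2 hcons (Set.subset_insert φ Δ) (Set.mem_insert φ Δ))⟩

end Lindenbaum

section MaximalConsistent

variable {A AP : Type} [Fintype A] [Nonempty AP] {Ax : Form A AP → Prop}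
  {Γ : Set (Form A AP)}

theorem ProvesFrom.of_mem {φ : Form A AP} (h : φ ∈ Γ) : ProvesFrom (Prf Ax) Γ φ :=
  ⟨[φ], by simpa using h, Prf.of_tautology fun v hv => by simp [hv.imp, hv.bigAnd]⟩

theorem ProvesFrom.of_prf {φ : Form A AP} (h : Prf Ax φ) : ProvesFrom (Prf Ax) Γ φ :=
  ⟨[], nofun, h.mp_tautology fun _ hv hφ => (hv.imp _ _).2 fun _ => hφ⟩

theorem ProvesFrom.mp_tautology₂ {φ₁ φ₂ ψ : Form A AP} (h₁ : ProvesFrom (Prf Ax) Γ φ₁)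
    (h₂ : ProvesFrom (Prf Ax) Γ φ₂) (h : ∀ v, IsValuation v → v φ₁ → v φ₂ → v ψ) :
    ProvesFrom (Prf Ax) Γ ψ := by
  obtain ⟨L₁, hL₁, hp₁⟩ := h₁
  obtain ⟨L₂, hL₂, hp₂⟩ := h₂
  refine ⟨L₁ ++ L₂, by simpa [or_imp, forall_and] using ⟨hL₁, hL₂⟩, ?_⟩
  refine Prf.mp_tautology₂ hp₁ hp₂ fun v hv h₁ h₂ => ?_
  simp only [hv.imp, hv.bigAnd, List.mem_append] at h₁ h₂ ⊢
  exact fun hL => h v hv (h₁ fun γ hγ => hL γ (.inl hγ)) (h₂ fun γ hγ => hL γ (.inr hγ))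

theorem ProvesFrom.imp_of_insert {φ ψ : Form A AP} (h : ProvesFrom (Prf Ax) (insert φ Γ) ψ) :
    ProvesFrom (Prf Ax) Γ (φ.imp ψ) := by
  obtain ⟨L, hL, hp⟩ := h
  refine ⟨L.filter (· ≠ φ), fun γ hγ => ?_, hp.mp_tautology fun v hv hLψ => ?_⟩
  · obtain ⟨hγL, hγφ⟩ := List.mem_filter.1 hγ
    exact (hL γ hγL).resolve_left (by simpa using hγφ)
  · simp only [hv.imp, hv.bigAnd, List.mem_filter] at hLψ ⊢
    intro hL' hφ
    refine hLψ fun γ hγ => ?_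
    by_cases hγφ : γ = φ
    · exact hγφ ▸ hφ
    · exact hL' γ ⟨hγ, by simpa using hγφ⟩

namespace MaxConsistent

theorem mem_of_provesFrom (hΓ : MaxConsistent (Prf Ax) Γ) {φ : Form A AP}
    (h : ProvesFrom (Prf Ax) Γ φ) : φ ∈ Γ := by
  by_contra hφ
  have hneg := (not_not.1 (hΓ.2 φ hφ)).imp_of_insert
  exact hΓ.1 (h.mp_tautology₂ hneg fun v hv hφ hφ' => (hv.imp _ _).1 hφ' hφ)

theorem mem_of_prf (hΓ : MaxConsistent (Prf Ax) Γ) {φ : Form A AP} (h : Prf Ax φ) : φ ∈ Γ :=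
  hΓ.mem_of_provesFrom (.of_prf h)

theorem mem_of_tautology₂ (hΓ : MaxConsistent (Prf Ax) Γ) {φ₁ φ₂ ψ : Form A AP}
    (h₁ : φ₁ ∈ Γ) (h₂ : φ₂ ∈ Γ) (h : ∀ v, IsValuation v → v φ₁ → v φ₂ → v ψ) : ψ ∈ Γ :=
  hΓ.mem_of_provesFrom ((ProvesFrom.of_mem h₁).mp_tautology₂ (.of_mem h₂) h)

theorem mem_of_tautology (hΓ : MaxConsistent (Prf Ax) Γ) {φ ψ : Form A AP} (hφ : φ ∈ Γ)
    (h : ∀ v, IsValuation v → v φ → v ψ) : ψ ∈ Γ :=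
  hΓ.mem_of_tautology₂ hφ hφ fun v hv hφ _ => h v hv hφ

theorem mem_of_prf_imp (hΓ : MaxConsistent (Prf Ax) Γ) {φ ψ : Form A AP} (hφ : φ ∈ Γ)
    (himp : Prf Ax (φ.imp ψ)) : ψ ∈ Γ :=
  hΓ.mem_of_tautology₂ hφ (hΓ.mem_of_prf himp) fun _ hv hφ himp => (hv.imp _ _).1 himp hφ

theorem falsum_not_mem (hΓ : MaxConsistent (Prf Ax) Γ) : (falsum : Form A AP) ∉ Γ :=
  fun h => hΓ.1 (.of_mem h)

theorem neg_mem_iff (hΓ : MaxConsistent (Prf Ax) Γ) {φ : Form A AP} : φ.neg ∈ Γ ↔ φ ∉ Γ := by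
  refine ⟨fun hneg hφ => hΓ.falsum_not_mem ?_, fun hφ => ?_⟩
  · exact hΓ.mem_of_tautology₂ hφ hneg fun v hv hφ hneg => ((hv.neg φ).1 hneg hφ).elim
  · have hneg := (not_not.1 (hΓ.2 φ hφ)).imp_of_insert
    refine hΓ.mem_of_provesFrom (hneg.mp_tautology₂ hneg fun v hv h _ => ?_)
    exact (hv.neg φ).2 fun hφ => hv.falsum ((hv.imp _ _).1 h hφ)

theorem and_mem_iff (hΓ : MaxConsistent (Prf Ax) Γ) {φ ψ : Form A AP} :
    φ.and ψ ∈ Γ ↔ φ ∈ Γ ∧ ψ ∈ Γ :=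
  ⟨fun h => ⟨hΓ.mem_of_tautology h fun _ hv h => ((hv.and _ _).1 h).1,
    hΓ.mem_of_tautology h fun _ hv h => ((hv.and _ _).1 h).2⟩,
   fun ⟨hφ, hψ⟩ => hΓ.mem_of_tautology₂ hφ hψ fun _ hv hφ hψ => (hv.and _ _).2 ⟨hφ, hψ⟩⟩

theorem bigAnd_mem_iff (hΓ : MaxConsistent (Prf Ax) Γ) {L : List (Form A AP)} :
    bigAnd L ∈ Γ ↔ ∀ γ ∈ L, γ ∈ Γ := by
  induction L with
  | nil => simpa [Form.bigAnd] using hΓ.mem_of_prf (Prf.of_tautology fun v hv => hv.verum)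
  | cons γ t ih => rw [Form.bigAnd, hΓ.and_mem_iff, ih, List.forall_mem_cons]

theorem exists_mem_of_bigOr_mem (hΓ : MaxConsistent (Prf Ax) Γ) {L : List (Form A AP)}
    (h : bigOr L ∈ Γ) : ∃ γ ∈ L, γ ∈ Γ := by
  induction L with
  | nil => exact absurd h hΓ.falsum_not_mem
  | cons γ t ih =>
    by_cases hγ : γ ∈ Γ
    · exact ⟨γ, List.mem_cons_self, hγ⟩
    · obtain ⟨γ', hγ', hγ'Γ⟩ := ih (hΓ.mem_of_tautology₂ h (hΓ.neg_mem_iff.2 hγ)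
        fun v hv h hγ => ((hv.or _ _).1 h).resolve_left ((hv.neg γ).1 hγ))
      exact ⟨γ', List.mem_cons_of_mem γ hγ', hγ'Γ⟩

theorem deadGrp_mem (hΓ : MaxConsistent (Prf Ax) Γ) {C : Finset A}
    (h : ∀ a ∈ C, aliveAgent a ∉ Γ) : deadGrp C ∈ Γ := by
  refine hΓ.bigAnd_mem_iff.2 fun γ hγ => ?_
  obtain ⟨a, ha, rfl⟩ := List.mem_map.1 hγ
  by_contra hdead
  exact h a (Finset.mem_toList.1 ha) (hΓ.neg_mem_iff.2 hdead)

end MaxConsistent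

theorem exists_maxConsistent_neg_mem {φ : Form A AP} (h : ¬ Prf Ax φ) :
    ∃ Γ, MaxConsistent (Prf Ax) Γ ∧ φ.neg ∈ Γ := by
  have hcons : ConsistentSet (Prf Ax) {φ.neg} := by
    rintro ⟨L, hL, hp⟩
    refine h (hp.mp_tautology fun v hv hL' => by_contra fun hφ => hv.falsum ?_)
    refine (hv.imp _ _).1 hL' ((hv.bigAnd L).2 fun γ hγ => ?_)
    rw [hL γ hγ, hv.neg]
    exact hφ
  obtain ⟨Γ, hsub, hΓ⟩ := hcons.exists_maxConsistent_superset
  exact ⟨Γ, hΓ, hsub rfl⟩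

end MaximalConsistent

namespace canonicalPsm

variable {A AP : Type} [Fintype A] [Nonempty AP] {Ax : Form A AP → Prop} {B : Finset A}

theorem rel_symm : Symmetric ((canonicalPsm A AP (Prf Ax)).rel B) := by
  intro Γ Δ hrel hB φ hφ
  by_contra hφΓ
  have hdiamond : dk B hB (dk B hB φ.neg.neg).neg ∈ Γ.1 :=
    Γ.2.mem_of_prf_imp (Γ.2.neg_mem_iff.2 hφΓ) (Prf.axB B hB)
  refine Δ.2.neg_mem_iff.1 (hrel hB _ hdiamond) (Δ.2.mem_of_prf_imp hφ (Prf.dk_imp_dk hB ?_))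
  exact Prf.of_tautology fun _ hv => by simp [hv.imp, hv.neg]

theorem rel_trans : Transitive ((canonicalPsm A AP (Prf Ax)).rel B) :=
  fun Γ _ _ h₁ h₂ hB φ hφ => h₂ hB φ (h₁ hB _ (Γ.2.mem_of_prf_imp hφ (Prf.ax4 B hB)))

theorem rel_anti {B' : Finset A} (hBB' : B ⊆ B') {Γ Δ} :
    (canonicalPsm A AP (Prf Ax)).rel B' Γ Δ → (canonicalPsm A AP (Prf Ax)).rel B Γ Δ :=
  fun hrel hB φ hφ =>
    hrel (hB.mono hBB') φ (Γ.2.mem_of_prf_imp hφ (Prf.axMono B B' hB (hB.mono hBB') hBB'))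

theorem exists_rel_neg_mem (Γ : {Γ : Set (Form A AP) // MaxConsistent (Prf Ax) Γ})
    (hB : B.Nonempty) {χ : Form A AP} (h : (dk B hB χ).neg ∈ Γ.1) :
    ∃ Δ, (canonicalPsm A AP (Prf Ax)).rel B Γ Δ ∧ χ.neg ∈ Δ.1 := by
  have hcons : ConsistentSet (Prf Ax) (insert χ.neg {ψ | dk B hB ψ ∈ Γ.1}) := by
    intro hinc
    obtain ⟨L, hL, hp⟩ := hinc.imp_of_insert
    have hχ : Prf Ax ((bigAnd L).imp χ) := hp.mp_tautology fun _ hv => by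
      simp only [hv.imp, hv.neg]
      exact fun h hL => by_contra fun hχ => hv.falsum (h hL hχ)
    have hL' : bigAnd (L.map (dk B hB)) ∈ Γ.1 :=
      Γ.2.bigAnd_mem_iff.2 fun γ hγ => by
        obtain ⟨ψ, hψ, rfl⟩ := List.mem_map.1 hγ
        exact hL ψ hψ
    exact Γ.2.neg_mem_iff.1 h (Γ.2.mem_of_prf_imp hL' (Prf.bigAnd_map_dk_imp hB hχ))
  obtain ⟨Δ, hsub, hΔ⟩ := hcons.exists_maxConsistent_superset
  exact ⟨⟨Δ, hΔ⟩, fun _ φ hφ => hsub (Set.mem_insert_of_mem _ hφ), hsub (Set.mem_insert _ _)⟩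

theorem rel_self_iff {Γ : {Γ : Set (Form A AP) // MaxConsistent (Prf Ax) Γ}}
    (hB : B.Nonempty) : (canonicalPsm A AP (Prf Ax)).rel B Γ Γ ↔ aliveGrp B hB ∈ Γ.1 := by
  refine ⟨fun hrel => Γ.2.neg_mem_iff.2 fun hdead => Γ.2.falsum_not_mem (hrel hB _ hdead),
    fun halive => ?_⟩
  obtain ⟨Δ, hrel, -⟩ := exists_rel_neg_mem Γ hB halive
  exact rel_trans hrel (rel_symm hrel)

theorem isPseudo : (canonicalPsm A AP (Prf Ax)).IsPseudo := by
  refine ⟨fun _ => rel_symm, fun _ => rel_trans, fun _ _ hBB' _ _ => rel_anti hBB', ?_⟩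
  intro Γ B B' h h'
  rcases B.eq_empty_or_nonempty with rfl | hB
  · simpa using h'
  rcases B'.eq_empty_or_nonempty with rfl | hB'
  · simpa using h
  refine (rel_self_iff (unionNE hB)).2 (Γ.2.mem_of_prf_imp ?_ (Prf.axUnion B B' hB hB'))
  exact Γ.2.and_mem_iff.2 ⟨(rel_self_iff hB).1 h, (rel_self_iff hB').1 h'⟩

theorem sat_iff (φ : Form A AP) (Γ : {Γ : Set (Form A AP) // MaxConsistent (Prf Ax) Γ}) :
    (canonicalPsm A AP (Prf Ax)).sat Γ φ ↔ φ ∈ Γ.1 := by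
  induction φ generalizing Γ with
  | atom p => exact Iff.rfl
  | neg ψ ih => exact (not_congr (ih Γ)).trans Γ.2.neg_mem_iff.symm
  | and ψ χ ihψ ihχ => exact (and_congr (ihψ Γ) (ihχ Γ)).trans Γ.2.and_mem_iff.symm
  | dk B hB ψ ih =>
    refine ⟨fun h => by_contra fun hψ => ?_, fun h Δ hrel => (ih Δ).2 (hrel hB ψ h)⟩
    obtain ⟨Δ, hrel, hneg⟩ := exists_rel_neg_mem Γ hB (Γ.2.neg_mem_iff.2 hψ)
    exact Δ.2.neg_mem_iff.1 hneg ((ih Δ).1 (h Δ hrel))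

theorem exists_aliveAgent_mem (Γ : {Γ : Set (Form A AP) // MaxConsistent (Prf Ax) Γ}) :
    ∃ a, aliveAgent a ∈ Γ.1 := by
  obtain ⟨γ, hγ, hγΓ⟩ := Γ.2.exists_mem_of_bigOr_mem (Γ.2.mem_of_prf Prf.axNE)
  obtain ⟨a, -, rfl⟩ := List.mem_map.1 hγ
  exact ⟨a, hγΓ⟩

theorem subset_of_rel {Γ Δ : {Γ : Set (Form A AP) // MaxConsistent (Prf Ax) Γ}}
    (hB : B.Nonempty) (hrel : (canonicalPsm A AP (Prf Ax)).rel B Γ Δ)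
    (hΓ : ∀ a, aliveAgent a ∈ Γ.1 ↔ a ∈ B) (hΔ : ∀ a, aliveAgent a ∈ Δ.1 ↔ a ∈ B) :
    Γ.1 ⊆ Δ.1 := by
  have hdead : ∀ Θ : {Γ : Set (Form A AP) // MaxConsistent (Prf Ax) Γ},
      (∀ a, aliveAgent a ∈ Θ.1 ↔ a ∈ B) → deadGrp Bᶜ ∈ Θ.1 :=
    fun Θ hΘ => Θ.2.deadGrp_mem fun a ha => mt (hΘ a).1 (Finset.mem_compl.1 ha)
  have halive : aliveGrp B hB ∈ Γ.1 := (rel_self_iff hB).1 (rel_trans hrel (rel_symm hrel))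
  intro φ hφ
  have hP : dk B hB ((deadGrp Bᶜ).imp φ) ∈ Γ.1 := Γ.2.mem_of_prf_imp
    (Γ.2.and_mem_iff.2 ⟨Γ.2.and_mem_iff.2 ⟨halive, hdead Γ hΓ⟩, hφ⟩) (Prf.axP B hB)
  exact Δ.2.mem_of_tautology₂ (hrel hB _ hP) (hdead Δ hΔ) fun _ hv h hd => (hv.imp _ _).1 h hd

theorem eq_of_rel {Γ Δ : {Γ : Set (Form A AP) // MaxConsistent (Prf Ax) Γ}}
    (hB : B.Nonempty) (hrel : (canonicalPsm A AP (Prf Ax)).rel B Γ Δ)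
    (hΓ : ∀ a, aliveAgent a ∈ Γ.1 ↔ a ∈ B) (hΔ : ∀ a, aliveAgent a ∈ Δ.1 ↔ a ∈ B) :
    Γ = Δ :=
  Subtype.ext ((subset_of_rel hB hrel hΓ hΔ).antisymm (subset_of_rel hB (rel_symm hrel) hΔ hΓ))

end canonicalPsm

section Unravelling

variable {A AP W : Type}

def pathEnd (w : W) (l : List (Finset A × W)) : W := (l.map Prod.snd).getLastD w

theorem pathEnd_cons (w x : W) (B : Finset A) (l : List (Finset A × W)) :
    pathEnd w ((B, x) :: l) = pathEnd x l :=
  List.getLastD_cons ..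

theorem pathEnd_append (w : W) (l₁ l₂ : List (Finset A × W)) :
    pathEnd w (l₁ ++ l₂) = pathEnd (pathEnd w l₁) l₂ := by
  induction l₁ generalizing w with
  | nil => rfl
  | cons s t ih => rw [List.cons_append, pathEnd_cons, pathEnd_cons, ih]

theorem pathEnd_concat (w x : W) (B : Finset A) (l : List (Finset A × W)) :
    pathEnd w (l ++ [(B, x)]) = x := by
  rw [pathEnd_append]
  rfl

variable {M : PseudoData A AP W}

theorem isHist_append_iff {w : W} {l₁ l₂ : List (Finset A × W)} :
    IsHist M w (l₁ ++ l₂) ↔ IsHist M w l₁ ∧ IsHist M (pathEnd w l₁) l₂ := by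
  induction l₁ generalizing w with
  | nil => simp [IsHist, pathEnd]
  | cons s t ih =>
    obtain ⟨B, x⟩ := s
    simp only [List.cons_append, IsHist, ih, pathEnd_cons, and_assoc]

theorem Hist.last_eq_pathEnd (h : Hist M) : h.last = pathEnd h.first h.steps := rfl

def Hist.snoc (h : Hist M) (B : Finset A) (w : W) (hw : M.rel B h.last w) : Hist M :=
  ⟨h.first, h.steps ++ [(B, w)], isHist_append_iff.2 ⟨h.valid, hw, trivial⟩⟩

theorem Hist.last_snoc (h : Hist M) (B : Finset A) (w : W) (hw : M.rel B h.last w) :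
    (h.snoc B w hw).last = w :=
  pathEnd_concat ..

theorem histRel_snoc {a : A} {B : Finset A} (ha : a ∈ B) (h : Hist M) (w : W)
    (hw : M.rel B h.last w) : histRel M a h (h.snoc B w hw) :=
  .single (.inl ⟨B, w, ha, rfl, rfl⟩)

theorem histRel_symm {a : A} {h g : Hist M} (hr : histRel M a h g) : histRel M a g h := by
  induction hr with
  | single hs => exact .single hs.symm
  | tail _ hs ih => exact .head hs.symm ih

theorem unravel_isPE : (unravel M).IsPE :=
  fun _ => ⟨fun _ _ => histRel_symm, fun _ _ _ => Relation.TransGen.trans⟩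

theorem histRel_first_eq_and_rdropWhile_eq {a : A} {h g : Hist M} (hr : histRel M a h g) :
    g.first = h.first ∧
      g.steps.rdropWhile (a ∈ ·.1) = h.steps.rdropWhile (a ∈ ·.1) := by
  have hstep : ∀ {h h' : Hist M}, histStep M a h h' → h'.first = h.first ∧
      h'.steps.rdropWhile (a ∈ ·.1) = h.steps.rdropWhile (a ∈ ·.1) := by
    rintro h h' ⟨B, w, ha, hfirst, hsteps⟩
    exact ⟨hfirst, by rw [hsteps, List.rdropWhile_concat_pos _ _ _ (by simpa using ha)]⟩
  induction hr with
  | single hs => exact hs.elim hstep fun hs => (hstep hs).imp Eq.symm Eq.symm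
  | tail _ hs ih =>
    exact hs.elim (fun hs => (hstep hs).imp (·.trans ih.1) (·.trans ih.2))
      fun hs => (hstep hs).imp (·.symm.trans ih.1) (·.symm.trans ih.2)

end Unravelling

namespace PseudoData.IsPseudo

variable {A AP W : Type} {M : PseudoData A AP W} {a : A} {B : Finset A}

theorem rel_self_of_forall_singleton (hM : M.IsPseudo) (hB : B.Nonempty) {w : W}
    (h : ∀ a ∈ B, M.rel {a} w w) : M.rel B w w := by
  induction hB using Finset.Nonempty.cons_induction with
  | singleton a => exact h a (Finset.mem_singleton_self a)
  | cons a s ha _ ih =>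
    rw [Finset.cons_eq_insert, Finset.insert_eq]
    exact hM.2.2.2 w _ _ (h a (Finset.mem_cons_self a s))
      (ih fun b hb => h b (Finset.mem_cons_of_mem hb))

theorem rel_last_of_histStep (hM : M.IsPseudo) {h h' : Hist M} (hs : histStep M a h h') :
    M.rel {a} h.last h'.last := by
  obtain ⟨B, w, ha, hfirst, hsteps⟩ := hs
  have hvalid := h'.valid
  rw [hsteps, hfirst, isHist_append_iff] at hvalid
  rw [Hist.last_eq_pathEnd h', hsteps, pathEnd_concat]
  exact hM.2.2.1 _ _ (Finset.singleton_subset_iff.2 ha) _ _ hvalid.2.1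

theorem rel_last_of_histRel (hM : M.IsPseudo) {h g : Hist M} (hr : histRel M a h g) :
    M.rel {a} h.last g.last := by
  have hstep : ∀ {h h' : Hist M}, histStep M a h h' ∨ histStep M a h' h →
      M.rel {a} h.last h'.last :=
    fun hs => hs.elim hM.rel_last_of_histStep fun hs => hM.1 _ (hM.rel_last_of_histStep hs)
  induction hr with
  | single hs => exact hstep hs
  | tail _ hs ih => exact hM.2.1 _ ih (hstep hs)

theorem histRel_self_iff (hM : M.IsPseudo) {h : Hist M} :
    histRel M a h h ↔ M.rel {a} h.last h.last :=
  ⟨hM.rel_last_of_histRel, fun hr =>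
    (histRel_snoc (Finset.mem_singleton_self a) h _ hr).trans (histRel_symm
      (histRel_snoc (Finset.mem_singleton_self a) h _ hr))⟩

theorem reflTransGen_pathEnd (hM : M.IsPseudo) {w : W} {l : List (Finset A × W)}
    (hl : IsHist M w l) (hB : ∀ s ∈ l, B ⊆ s.1) :
    Relation.ReflTransGen (M.rel B) w (pathEnd w l) := by
  induction l generalizing w with
  | nil => exact .refl
  | cons s t ih =>
    obtain ⟨C, x⟩ := s
    rw [pathEnd_cons]
    exact .head (hM.2.2.1 _ _ (hB _ List.mem_cons_self) _ _ hl.1)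
      (ih hl.2 fun s hs => hB s (List.mem_cons_of_mem _ hs))

theorem reflTransGen_last (hM : M.IsPseudo) {k : Hist M} {c d : List (Finset A × W)}
    (hk : k.steps = c ++ d) (hd : ∀ s ∈ d, B ⊆ s.1) :
    Relation.ReflTransGen (M.rel B) (pathEnd k.first c) k.last := by
  have hvalid := k.valid
  rw [hk, isHist_append_iff] at hvalid
  rw [Hist.last_eq_pathEnd, hk, pathEnd_append]
  exact hM.reflTransGen_pathEnd hvalid.2 hd

/-- Dropping the final steps taken by groups containing `a` is invariant under `∼_a`; the
longest of these truncations over `a ∈ B` is a common prefix of `h` and `g` after which every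
step is taken by a group containing `B`. -/
theorem rel_last_of_forall_histRel (hM : M.IsPseudo) (hB : B.Nonempty) {h g : Hist M}
    (hrel : ∀ a ∈ B, histRel M a h g) : M.rel B h.last g.last := by
  obtain ⟨c, d, d', hd, hd', hdB, hd'B⟩ := List.exists_common_prefix_of_rdropWhile_eq
    (fun (a : A) (s : Finset A × W) => decide (a ∈ s.1)) hB (l := h.steps) (l' := g.steps)
    fun a ha => (histRel_first_eq_and_rdropWhile_eq (hrel a ha)).2
  have hfirst : g.first = h.first :=
    (histRel_first_eq_and_rdropWhile_eq (hrel _ hB.choose_spec)).1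
  have hself : M.rel B h.last h.last := hM.rel_self_of_forall_singleton hB fun a ha =>
    hM.histRel_self_iff.1 ((hrel a ha).trans (histRel_symm (hrel a ha)))
  have : Std.Symm (M.rel B) := ⟨fun _ _ h => hM.1 B h⟩
  have : IsTrans W (M.rel B) := ⟨fun _ _ _ => @hM.2.1 B _ _ _⟩
  refine (hM.reflTransGen_last hd fun s hs => ?_).rel_of_rel_self
    (hfirst ▸ hM.reflTransGen_last hd' fun s hs => ?_) hself
  · exact fun a ha => by simpa using hdB s hs a ha
  · exact fun a ha => by simpa using hd'B s hs a ha

theorem unravel_sat_iff (hM : M.IsPseudo) (φ : Form A AP) (h : Hist M) :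
    (unravel M).sat h φ ↔ M.sat h.last φ := by
  induction φ generalizing h with
  | atom p => exact Iff.rfl
  | neg ψ ih => exact not_congr (ih h)
  | and ψ χ ihψ ihχ => exact and_congr (ihψ h) (ihχ h)
  | dk B hB ψ ih =>
    refine ⟨fun hsat w hw => ?_, fun hsat g hg =>
      (ih g).2 (hsat _ (hM.rel_last_of_forall_histRel hB hg))⟩
    rw [← Hist.last_snoc h B w hw, ← ih]
    exact hsat _ fun a ha => histRel_snoc ha h w hw

end PseudoData.IsPseudo

section Sigma

variable {A AP W : Type} [Fintype A] {M : PEData A AP W} {a : A} {w w' : W}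

theorem mem_sigmaWorld {v : sigmaVert M} :
    v ∈ sigmaWorld M w ↔ M.rel v.1.1 w w ∧ v.1.2 = {w' | M.rel v.1.1 w w'} := by
  refine ⟨fun hv => ?_, fun ⟨hw, hv⟩ => Finset.mem_image.2
    ⟨⟨v.1.1, Finset.mem_filter.2 ⟨Finset.mem_univ _, hw⟩⟩, Finset.mem_attach _ _,
      Subtype.ext (Prod.ext rfl hv.symm)⟩⟩
  obtain ⟨b, -, rfl⟩ := Finset.mem_image.1 hv
  exact ⟨(Finset.mem_filter.1 b.2).2, rfl⟩

def sigmaVtx (M : PEData A AP W) (a : A) (w : W) (h : M.rel a w w) : sigmaVert M :=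
  ⟨(a, {w' | M.rel a w w'}), w, h, rfl⟩

theorem sigmaVtx_mem_sigmaWorld (h : M.rel a w w) : sigmaVtx M a w h ∈ sigmaWorld M w :=
  mem_sigmaWorld.2 ⟨h, rfl⟩

theorem rel_of_mem_sigmaWorld {v : sigmaVert M} (hv : v ∈ sigmaWorld M w)
    (hv' : v ∈ sigmaWorld M w') : M.rel v.1.1 w w' := by
  obtain ⟨-, hclass⟩ := mem_sigmaWorld.1 hv
  obtain ⟨hw', hclass'⟩ := mem_sigmaWorld.1 hv'
  have hmem : w' ∈ v.1.2 := hclass' ▸ hw'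
  rwa [hclass] at hmem

theorem sigmaModel_isModel (hne : M.NoEmptyWorld) : (sigmaModel M).IsModel := by
  have hworld : ∀ w, sigmaWorld M w ∈ (sigmaModel M).S := fun w =>
    ⟨⟨_, sigmaVtx_mem_sigmaWorld (hne w).choose_spec⟩, w, subset_rfl⟩
  refine ⟨⟨fun X hX => hX.1, fun v => ?_, fun X hX Y hYX hY => ⟨hY, ?_⟩, ?_⟩, ?_, ?_⟩
  · obtain ⟨w, hw, hv⟩ := v.2
    refine ⟨Finset.singleton_nonempty v, w, Finset.singleton_subset_iff.2 ?_⟩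
    exact mem_sigmaWorld.2 ⟨hw, hv⟩
  · obtain ⟨-, w, hXw⟩ := hX
    exact ⟨w, hYX.trans hXw⟩
  · rintro X ⟨-, w, hXw⟩ v hv u hu (hcol : v.1.1 = u.1.1)
    obtain ⟨-, hv⟩ := mem_sigmaWorld.1 (hXw hv)
    obtain ⟨-, hu⟩ := mem_sigmaWorld.1 (hXw hu)
    exact Subtype.ext (Prod.ext hcol (by rw [hv, hu, hcol]))
  · rintro X ⟨⟨-, w, hXw⟩, hmax⟩
    exact ⟨w, hmax _ (hworld w) hXw⟩
  · rintro X ⟨w, rfl⟩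
    exact hworld w

theorem pequiv_of_sigmaWorld_eq (h : sigmaWorld M w = sigmaWorld M w') : pequiv M w w' := by
  have hlive : ∀ {w w'}, sigmaWorld M w = sigmaWorld M w' → M.live w ⊆ M.live w' :=
    fun h a ha => (mem_sigmaWorld.1 (h ▸ sigmaVtx_mem_sigmaWorld ha)).1
  exact ⟨(hlive h).antisymm (hlive h.symm), fun a ha =>
    rel_of_mem_sigmaWorld (sigmaVtx_mem_sigmaWorld ha) (h ▸ sigmaVtx_mem_sigmaWorld ha)⟩

theorem subset_chi_sigmaWorld_inter_iff (hM : M.IsPE) {B : Finset A} :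
    (↑B : Set A) ⊆ (sigmaModel M).chi '' (↑(sigmaWorld M w) ∩ ↑(sigmaWorld M w')) ↔
      ∀ a ∈ B, M.rel a w w' := by
  refine ⟨fun hB a ha => ?_, fun hB a ha => ?_⟩
  · obtain ⟨v, ⟨hv, hv'⟩, rfl⟩ := hB ha
    exact rel_of_mem_sigmaWorld hv hv'
  · have hr := hB a ha
    have hr' := (hM a).1 hr
    refine ⟨sigmaVtx M a w ((hM a).2 hr hr'), ⟨sigmaVtx_mem_sigmaWorld _, ?_⟩, rfl⟩
    refine mem_sigmaWorld.2 ⟨(hM a).2 hr' hr, Set.ext fun u => ?_⟩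
    exact ⟨(hM a).2 hr', (hM a).2 hr⟩

theorem sigmaModel_sat_iff (hM : M.IsPE)
    (hlabel : ∀ w w', pequiv M w w' → M.label w = M.label w') (φ : Form A AP) (w : W) :
    (sigmaModel M).sat (sigmaWorld M w) φ ↔ M.sat w φ := by
  induction φ generalizing w with
  | atom p =>
    refine ⟨fun ⟨w', hw', hp⟩ => ?_, fun hp => ⟨w, rfl, hp⟩⟩
    show p ∈ M.label w
    rwa [hlabel w w' (pequiv_of_sigmaWorld_eq hw')]
  | neg ψ ih => exact not_congr (ih w)
  | and ψ χ ihψ ihχ => exact and_congr (ihψ w) (ihχ w)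
  | dk B hB ψ ih =>
    refine ⟨fun hsat w' hw' => (ih w').1 (hsat _ ⟨w', rfl⟩
      ((subset_chi_sigmaWorld_inter_iff hM).2 hw')), ?_⟩
    rintro hsat _ ⟨w', rfl⟩ hsub
    exact (ih w').2 (hsat w' ((subset_chi_sigmaWorld_inter_iff hM).1 hsub))

end Sigma

namespace canonicalPsm

variable {A AP : Type} [Fintype A] [Nonempty AP] {Ax : Form A AP → Prop}

theorem histRel_self_iff {a : A} {h : Hist (canonicalPsm A AP (Prf Ax))} :
    histRel _ a h h ↔ aliveAgent a ∈ h.last.1 :=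
  isPseudo.histRel_self_iff.trans (rel_self_iff (Finset.singleton_nonempty a))

theorem unravel_noEmptyWorld : (unravel (canonicalPsm A AP (Prf Ax))).NoEmptyWorld := fun h =>
  (exists_aliveAgent_mem h.last).imp fun _ => histRel_self_iff.2

theorem last_eq_of_pequiv {h g : Hist (canonicalPsm A AP (Prf Ax))}
    (hpe : pequiv (unravel _) h g) : h.last = g.last := by
  set B := Finset.univ.filter fun a => histRel _ a h h
  have hB : B.Nonempty :=
    (unravel_noEmptyWorld h).imp fun a ha => Finset.mem_filter.2 ⟨Finset.mem_univ a, ha⟩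
  have hrel := isPseudo.rel_last_of_forall_histRel hB fun a ha =>
    hpe.2 a (Finset.mem_filter.1 ha).2
  refine eq_of_rel hB hrel (fun a => ?_) (fun a => ?_)
  · simp [B, ← histRel_self_iff]
  · simp only [B, ← histRel_self_iff, Finset.mem_filter, Finset.mem_univ, true_and]
    exact (Set.ext_iff.1 hpe.1 a).symm

end canonicalPsm

/-- Completeness of `SC` for simplicial models: if `φ` is valid in every
(generalized) simplicial model, then `φ` is provable in `SC`. -/
theorem completeness_SC_simplicial (A AP : Type) [Fintype A] [Nonempty AP]
    (φ : Form A AP)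
    (hval : ∀ (V : Type) (C : SimpData A AP V), C.IsModel → ∀ w ∈ C.Wld, C.sat w φ) :
    SC φ := by
  by_contra hφ
  obtain ⟨Γ, hΓ, hneg⟩ := exists_maxConsistent_neg_mem hφ
  let h₀ : Hist (canonicalPsm A AP (Prf fun _ => False)) := ⟨⟨Γ, hΓ⟩, [], trivial⟩
  have hsat := hval _ _ (sigmaModel_isModel canonicalPsm.unravel_noEmptyWorld) _ ⟨h₀, rfl⟩
  rw [sigmaModel_sat_iff unravel_isPE fun _ _ hpe =>
      congrArg (canonicalPsm A AP _).label (canonicalPsm.last_eq_of_pequiv hpe),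
    canonicalPsm.isPseudo.unravel_sat_iff, canonicalPsm.sat_iff] at hsat
  exact hΓ.neg_mem_iff.1 hneg hsat
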